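/- Let B be a fractional Brownian motion with Hurst index H ∈ (1/2,1) on [0,1]. Fix α ∈ (1/2,H), δ ∈ (0,H−α), constants ν, ν* > 0, set ρ = 2(ν + ν*), and let N = sup{k ≥ 1 : max_{0 ≤ j ≤ 2^{k-1}-1} |a^k_j − b^k_j| ≥ ρ·2^{−(H−δ)k}} (N = 0 if the set is empty). Then almost surely ‖B‖_α ≤ ‖B_N‖_α + ρ·2^{2−α}·2^{−(H−α−δ)(N+1)} / (1 − 2^{−(H−α−δ)}), where B_N is the piecewise linear interpolation of B on the dyadic grid D_N. -/

import Mathlib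

/-!
Write `B = B_N + ∑_{n ≥ N} (B_{n+1} - B_n)`. On a dyadic cell of level `n` the correction
`B_{n+1} - B_n` is the hat function of the cell times the midpoint defect `a^{n+1}_j - b^{n+1}_j`,
so it is bounded by the maximal defect `M_{n+1}` and is `2^{n+1} M_{n+1}`-Lipschitz; taking the
better of the two bounds gives it the `α`-Hölder constant `2 M_{n+1} 2^{(n+1)α}`. Beyond the last
record-breaker `N` we have `M_{n+1} ≤ ρ 2^{-(H-δ)(n+1)}`, and summing a geometric series gives the
stated constant.

The only probabilistic input is that `N` is a.s. well defined, i.e. that there are a.s. finitely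
many record-breakers (otherwise the `sSup` in `lastRB` is a junk `0`). Each defect is a centred
Gaussian of variance at most `2^{-2Hk}`, so the Chernoff bound and a union bound over the `2^{k-1}`
defects of level `k` give `P(k is a record-breaker) ≤ 2^k exp(-ρ² 2^{2δk} / 2)`, which is summable;
conclude by Borel–Cantelli.
-/

open MeasureTheory ProbabilityTheory Filter

noncomputable section

/-- Covariance function of fractional Brownian motion with Hurst index `H`. -/
def fbmCov (H s t : ℝ) : ℝ := (s ^ (2 * H) + t ^ (2 * H) - |s - t| ^ (2 * H)) / 2

/-- `B` is a fractional Brownian motion with Hurst index `H` on `[0,1]` under `P`. -/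
structure IsFBM {Ω : Type*} [MeasurableSpace Ω] (P : Measure Ω) (H : ℝ)
    (B : Ω → ℝ → ℝ) : Prop where
  continuousOn : ∀ ω, ContinuousOn (B ω) (Set.Icc 0 1)
  init : ∀ ω, B ω 0 = 0
  measurable : ∀ t : ℝ, Measurable fun ω => B ω t
  gaussian : ∀ (m : ℕ) (t : Fin m → ℝ), (∀ i, t i ∈ Set.Icc (0:ℝ) 1) →
    ∀ c : Fin m → ℝ,
      Measure.map (fun ω => ∑ i, c i * B ω (t i)) P =
        gaussianReal 0 (∑ i, ∑ j, c i * c j * fbmCov H (t i) (t j)).toNNReal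

/-- `max_{0 ≤ j ≤ 2^{k-1}-1} |a^k_j − b^k_j|` for the path `B`. -/
def mdGap (B : ℝ → ℝ) (k : ℕ) : ℝ :=
  (Finset.range (2 ^ (k - 1))).sup' (Finset.nonempty_range_iff.mpr (by positivity))
    fun j => |B ((2 * (j:ℝ) + 1) / 2 ^ k) -
      (B ((j:ℝ) / 2 ^ (k - 1)) + B (((j:ℝ) + 1) / 2 ^ (k - 1))) / 2|

/-- The level of the last record-breaker. -/
def lastRB (H δ ρ : ℝ) (B : ℝ → ℝ) : ℕ :=
  sSup {k : ℕ | 1 ≤ k ∧ ρ * (2:ℝ) ^ (-(H - δ) * (k:ℝ)) ≤ mdGap B k}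

/-- Piecewise linear interpolation of `f` on the dyadic grid `D_n`. -/
def dyadicInterp (n : ℕ) (f : ℝ → ℝ) (t : ℝ) : ℝ :=
  f ((⌊t * 2 ^ n⌋ : ℝ) / 2 ^ n) +
    (t * 2 ^ n - (⌊t * 2 ^ n⌋ : ℝ)) *
      (f (((⌊t * 2 ^ n⌋ : ℝ) + 1) / 2 ^ n) - f ((⌊t * 2 ^ n⌋ : ℝ) / 2 ^ n))

/-- `α`-Hölder norm of `u` on `[0,1]`. -/
def holderNorm01 (a : ℝ) (u : ℝ → ℝ) : ℝ :=
  sSup {c : ℝ | ∃ s t : ℝ, 0 ≤ s ∧ s < t ∧ t ≤ 1 ∧ c = |u t - u s| / (t - s) ^ a}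


open Set Finset Topology
open scoped NNReal

lemma abs_sub_le_mul_of_chain {g : ℝ → ℝ} {L : ℝ} {p : ℕ → ℝ} {k : ℕ}
    (hcell : ∀ i < k, ∀ s t, p i ≤ s → s ≤ t → t ≤ p (i + 1) → |g t - g s| ≤ L * (t - s)) :
    ∀ s t, p 0 ≤ s → s ≤ t → t ≤ p k → |g t - g s| ≤ L * (t - s) := by
  induction k with
  | zero =>
    intro s t hs hst ht
    obtain rfl : s = t := le_antisymm hst (ht.trans hs)
    simp
  | succ k ih =>
    intro s t hs hst ht
    have ih := ih fun i hi => hcell i (by omega)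
    rcases le_total t (p k) with htk | htk
    · exact ih s t hs hst htk
    rcases le_total (p k) s with hsk | hsk
    · exact hcell k (by omega) s t hsk hst ht
    calc |g t - g s| ≤ |g t - g (p k)| + |g (p k) - g s| := abs_sub_le _ _ _
      _ ≤ L * (t - p k) + L * (p k - s) :=
          add_le_add (hcell k (by omega) _ t le_rfl htk ht) (ih s _ hs hsk le_rfl)
      _ = L * (t - s) := by ring

lemma abs_sub_le_mul_of_dyadic_cells {g : ℝ → ℝ} {L : ℝ} (n : ℕ)
    (hcell : ∀ i : ℕ, i < 2 ^ n → ∀ s t, (i : ℝ) / 2 ^ n ≤ s → s ≤ t →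
      t ≤ ((i : ℝ) + 1) / 2 ^ n → |g t - g s| ≤ L * (t - s))
    {s t : ℝ} (hs : 0 ≤ s) (hst : s ≤ t) (ht : t ≤ 1) :
    |g t - g s| ≤ L * (t - s) := by
  refine abs_sub_le_mul_of_chain (p := fun i : ℕ => (i : ℝ) / 2 ^ n) (k := 2 ^ n)
    (fun i hi s t => ?_) s t (by simpa using hs) hst (by simpa using ht)
  push_cast
  exact hcell i hi s t

lemma exists_dyadic_cell (n : ℕ) {t : ℝ} (ht : t ∈ Icc (0 : ℝ) 1) :
    ∃ i : ℕ, i < 2 ^ n ∧ (i : ℝ) / 2 ^ n ≤ t ∧ t ≤ ((i : ℝ) + 1) / 2 ^ n := by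
  have hpos : (0 : ℝ) < 2 ^ n := by positivity
  simp only [div_le_iff₀ hpos, le_div_iff₀ hpos]
  rcases ht.2.lt_or_eq with ht1 | rfl
  · have ht0 : 0 ≤ t * 2 ^ n := mul_nonneg ht.1 hpos.le
    refine ⟨⌊t * 2 ^ n⌋₊, ?_, Nat.floor_le ht0, (Nat.lt_floor_add_one _).le⟩
    rw [Nat.floor_lt ht0]
    push_cast
    nlinarith
  · refine ⟨2 ^ n - 1, Nat.sub_lt (by positivity) one_pos, ?_, ?_⟩ <;>
    · rw [Nat.cast_sub Nat.one_le_two_pow]; push_cast; linarith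

lemma le_mul_rpow_of_le_mul_of_le {d C y a : ℝ} (hC : 0 ≤ C) (hy : 0 ≤ y) (ha0 : 0 ≤ a)
    (ha1 : a ≤ 1) (hlin : d ≤ C * y) (hconst : d ≤ C) : d ≤ C * y ^ a := by
  rcases le_total y 1 with hy1 | hy1
  · exact hlin.trans (mul_le_mul_of_nonneg_left (Real.self_le_rpow_of_le_one hy hy1 ha1) hC)
  · exact hconst.trans (le_mul_of_one_le_right hC (Real.one_le_rpow hy1 ha0))

/-- The Faber–Schauder hat function of `[0, 1]`. -/
def tent (x : ℝ) : ℝ := 1 - |2 * x - 1|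

lemma abs_tent_le_one {x : ℝ} (h0 : 0 ≤ x) (h1 : x ≤ 1) : |tent x| ≤ 1 := by
  have h : |2 * x - 1| ≤ 1 := abs_le.2 ⟨by linarith, by linarith⟩
  exact abs_le.2 ⟨by rw [tent]; linarith, by rw [tent]; linarith [abs_nonneg (2 * x - 1)]⟩

lemma abs_tent_sub_le (x y : ℝ) : |tent x - tent y| ≤ 2 * |x - y| := by
  calc |tent x - tent y| = |(|2 * y - 1|) - (|2 * x - 1|)| := by rw [tent, tent]; ring_nf
    _ ≤ |(2 * y - 1) - (2 * x - 1)| := abs_abs_sub_abs_le_abs_sub _ _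
    _ = 2 * |x - y| := by rw [← abs_two, ← abs_mul, abs_sub_comm]; ring_nf

section DyadicInterpolation

variable (f : ℝ → ℝ) (n : ℕ)

lemma dyadicInterp_eq_of_mem_cell {i : ℕ} {t : ℝ} (h1 : (i : ℝ) / 2 ^ n ≤ t)
    (h2 : t ≤ ((i : ℝ) + 1) / 2 ^ n) :
    dyadicInterp n f t = f ((i : ℝ) / 2 ^ n) +
      (t * 2 ^ n - i) * (f (((i : ℝ) + 1) / 2 ^ n) - f ((i : ℝ) / 2 ^ n)) := by
  have hpos : (0 : ℝ) < 2 ^ n := by positivity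
  rw [div_le_iff₀ hpos] at h1
  rw [le_div_iff₀ hpos] at h2
  rcases h2.lt_or_eq with h2 | h2
  · have hfl : ⌊t * 2 ^ n⌋ = i := by
      rw [Int.floor_eq_iff]; push_cast; exact ⟨h1, h2⟩
    simp [dyadicInterp, hfl]
  · have hfl : ⌊t * 2 ^ n⌋ = i + 1 := by
      rw [h2]; exact_mod_cast Int.floor_natCast (i + 1)
    rw [dyadicInterp, hfl, h2]
    push_cast
    ring

lemma dyadicInterp_sub_of_mem_cell {i : ℕ} {s t : ℝ} (hs : (i : ℝ) / 2 ^ n ≤ s) (hst : s ≤ t)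
    (ht : t ≤ ((i : ℝ) + 1) / 2 ^ n) :
    dyadicInterp n f t - dyadicInterp n f s =
      2 ^ n * (f (((i : ℝ) + 1) / 2 ^ n) - f ((i : ℝ) / 2 ^ n)) * (t - s) := by
  rw [dyadicInterp_eq_of_mem_cell f n (hs.trans hst) ht,
    dyadicInterp_eq_of_mem_cell f n hs (hst.trans ht)]
  ring

lemma exists_lipschitz_dyadicInterp : ∃ L, ∀ s t : ℝ, 0 ≤ s → s ≤ t → t ≤ 1 →
    |dyadicInterp n f t - dyadicInterp n f s| ≤ L * (t - s) := by
  set D : ℕ → ℝ := fun i => |f (((i : ℝ) + 1) / 2 ^ n) - f ((i : ℝ) / 2 ^ n)|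
  refine ⟨2 ^ n * ∑ i ∈ range (2 ^ n), D i, fun s t => abs_sub_le_mul_of_dyadic_cells n ?_⟩
  intro i hi s t hs hst ht
  rw [dyadicInterp_sub_of_mem_cell f n hs hst ht, abs_mul, abs_mul,
    abs_of_nonneg (sub_nonneg.2 hst), abs_of_pos (by positivity)]
  gcongr
  exact single_le_sum (f := D) (fun _ _ => abs_nonneg _) (mem_range.2 hi)

/-- `a^{n+1}_j - b^{n+1}_j` in the notation of the paper. -/
def dyadicDefect (n j : ℕ) : ℝ :=
  f ((2 * (j : ℝ) + 1) / 2 ^ (n + 1)) - (f ((j : ℝ) / 2 ^ n) + f (((j : ℝ) + 1) / 2 ^ n)) / 2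

lemma abs_dyadicDefect_le_mdGap {j : ℕ} (hj : j < 2 ^ n) :
    |dyadicDefect f n j| ≤ mdGap f (n + 1) :=
  le_sup' (fun j : ℕ => |dyadicDefect f n j|) (mem_range.2 hj)

lemma le_mdGap_succ_iff {x : ℝ} :
    x ≤ mdGap f (n + 1) ↔ ∃ j < 2 ^ n, x ≤ |dyadicDefect f n j| := by
  simp [mdGap, le_sup'_iff, dyadicDefect]

def dyadicIncrement (t : ℝ) : ℝ := dyadicInterp (n + 1) f t - dyadicInterp n f t

lemma dyadicIncrement_eq_of_mem_cell {j : ℕ} {t : ℝ} (h1 : (j : ℝ) / 2 ^ n ≤ t)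
    (h2 : t ≤ ((j : ℝ) + 1) / 2 ^ n) :
    dyadicIncrement f n t = tent (t * 2 ^ n - j) * dyadicDefect f n j := by
  have hpos : (0 : ℝ) < 2 ^ n := by positivity
  have hsucc : (2 : ℝ) ^ (n + 1) = 2 * 2 ^ n := pow_succ' 2 n
  have hleft : (j : ℝ) / 2 ^ n = 2 * (j : ℝ) / 2 ^ (n + 1) := by
    rw [hsucc, mul_div_mul_left _ _ two_ne_zero]
  have hright : ((j : ℝ) + 1) / 2 ^ n = (2 * (j : ℝ) + 1 + 1) / 2 ^ (n + 1) := by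
    rw [hsucc, ← mul_div_mul_left _ _ (two_ne_zero' ℝ)]; ring_nf
  have hcoarse := dyadicInterp_eq_of_mem_cell f n h1 h2
  rw [div_le_iff₀ hpos] at h1
  rw [le_div_iff₀ hpos] at h2
  rw [dyadicIncrement, hcoarse, dyadicDefect, tent]
  rcases le_total t ((2 * (j : ℝ) + 1) / 2 ^ (n + 1)) with hmid | hmid
  · have hfine := dyadicInterp_eq_of_mem_cell f (n + 1) (i := 2 * j)
      (by push_cast; rwa [← hleft, div_le_iff₀ hpos]) (by push_cast; exact hmid)
    push_cast at hfine
    rw [hfine, ← hleft]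
    rw [le_div_iff₀ (by positivity), hsucc] at hmid
    rw [abs_of_nonpos (by linarith), hsucc]
    ring
  · have hfine := dyadicInterp_eq_of_mem_cell f (n + 1) (i := 2 * j + 1)
      (by push_cast; exact hmid) (by push_cast; rwa [← hright, le_div_iff₀ hpos])
    push_cast at hfine
    rw [hfine, ← hright]
    rw [div_le_iff₀ (by positivity), hsucc] at hmid
    rw [abs_of_nonneg (by linarith), hsucc]
    ring

lemma abs_dyadicIncrement_le {t : ℝ} (ht : t ∈ Icc (0 : ℝ) 1) :
    |dyadicIncrement f n t| ≤ mdGap f (n + 1) := by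
  obtain ⟨j, hj, h1, h2⟩ := exists_dyadic_cell n ht
  have hpos : (0 : ℝ) < 2 ^ n := by positivity
  rw [dyadicIncrement_eq_of_mem_cell f n h1 h2, abs_mul]
  rw [div_le_iff₀ hpos] at h1
  rw [le_div_iff₀ hpos] at h2
  calc _ ≤ 1 * |dyadicDefect f n j| := by
        gcongr; exact abs_tent_le_one (by linarith) (by linarith)
    _ ≤ mdGap f (n + 1) := by rw [one_mul]; exact abs_dyadicDefect_le_mdGap f n hj

lemma abs_dyadicIncrement_sub_le {s t : ℝ} (hs : 0 ≤ s) (hst : s ≤ t) (ht : t ≤ 1) :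
    |dyadicIncrement f n t - dyadicIncrement f n s| ≤
      2 ^ (n + 1) * mdGap f (n + 1) * (t - s) := by
  refine abs_sub_le_mul_of_dyadic_cells n (fun j hj s t h1 hst h2 => ?_) hs hst ht
  rw [dyadicIncrement_eq_of_mem_cell f n h1 (hst.trans h2),
    dyadicIncrement_eq_of_mem_cell f n (h1.trans hst) h2, ← sub_mul, abs_mul]
  have htent : |tent (t * 2 ^ n - j) - tent (s * 2 ^ n - j)| ≤ 2 * 2 ^ n * (t - s) := by
    refine (abs_tent_sub_le _ _).trans_eq ?_
    rw [abs_of_nonneg (by nlinarith [pow_pos (two_pos (α := ℝ)) n])]; ring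
  calc _ ≤ 2 * 2 ^ n * (t - s) * mdGap f (n + 1) :=
        mul_le_mul htent (abs_dyadicDefect_le_mdGap f n hj) (abs_nonneg _) (by positivity)
    _ = 2 ^ (n + 1) * mdGap f (n + 1) * (t - s) := by ring

lemma mdGap_succ_nonneg : 0 ≤ mdGap f (n + 1) :=
  (abs_nonneg _).trans (abs_dyadicDefect_le_mdGap f n (Nat.two_pow_pos n))

lemma abs_dyadicIncrement_sub_le_rpow {a s t : ℝ} (ha0 : 0 ≤ a) (ha1 : a ≤ 1) (hs : 0 ≤ s)
    (hst : s ≤ t) (ht : t ≤ 1) :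
    |dyadicIncrement f n t - dyadicIncrement f n s| ≤
      2 * mdGap f (n + 1) * (2 ^ (n + 1) * (t - s)) ^ a := by
  have hM := mdGap_succ_nonneg f n
  refine le_mul_rpow_of_le_mul_of_le (by positivity)
    (mul_nonneg (by positivity) (sub_nonneg.2 hst)) ha0 ha1 ?_ ?_
  · refine (abs_dyadicIncrement_sub_le f n hs hst ht).trans ?_
    nlinarith [mul_nonneg hM (mul_nonneg (pow_nonneg (zero_le_two (α := ℝ)) (n + 1))
      (sub_nonneg.2 hst))]
  · linarith [abs_sub (dyadicIncrement f n t) (dyadicIncrement f n s),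
      abs_dyadicIncrement_le f n ⟨hs.trans hst, ht⟩,
      abs_dyadicIncrement_le f n ⟨hs, hst.trans ht⟩]

lemma tendsto_dyadicInterp (hf : ContinuousOn f (Icc 0 1)) {t : ℝ} (ht : t ∈ Icc (0 : ℝ) 1) :
    Tendsto (fun n => dyadicInterp n f t) atTop (𝓝 (f t)) := by
  choose j hj h1 h2 using fun n => exists_dyadic_cell n ht
  set a : ℕ → ℝ := fun n => (j n : ℝ) / 2 ^ n
  set b : ℕ → ℝ := fun n => ((j n : ℝ) + 1) / 2 ^ n
  have hwidth : ∀ n, b n - a n = (1 / 2) ^ n := fun n => by simp [a, b, ← sub_div]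
  have hsmall : Tendsto (fun n : ℕ => ((1 : ℝ) / 2) ^ n) atTop (𝓝 0) :=
    tendsto_pow_atTop_nhds_zero_of_lt_one (by norm_num) (by norm_num)
  have ha : Tendsto a atTop (𝓝[Icc 0 1] t) := by
    refine tendsto_nhdsWithin_iff.2
      ⟨?_, Eventually.of_forall fun n => ⟨by positivity, (h1 n).trans ht.2⟩⟩
    refine tendsto_of_tendsto_of_tendsto_of_le_of_le (g := fun n => t - (1 / 2) ^ n)
      (by simpa using tendsto_const_nhds.sub hsmall) tendsto_const_nhds (fun n => ?_) h1
    linarith [h2 n, hwidth n]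
  have hb : Tendsto b atTop (𝓝[Icc 0 1] t) := by
    refine tendsto_nhdsWithin_iff.2 ⟨?_, Eventually.of_forall fun n => ⟨ht.1.trans (h2 n), ?_⟩⟩
    · refine tendsto_of_tendsto_of_tendsto_of_le_of_le (h := fun n => t + (1 / 2) ^ n)
        tendsto_const_nhds (by simpa using tendsto_const_nhds.add hsmall) h2 (fun n => ?_)
      linarith [h1 n, hwidth n]
    · rw [div_le_one (by positivity)]; exact_mod_cast hj n
  have hθ : ∀ n, 0 ≤ t * 2 ^ n - j n ∧ t * 2 ^ n - j n ≤ 1 := fun n => by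
    have := h1 n; have := h2 n
    rw [div_le_iff₀ (by positivity)] at *; rw [le_div_iff₀ (by positivity)] at *
    constructor <;> linarith
  have hbound : ∀ n, ‖dyadicInterp n f t - f t‖ ≤ |f (a n) - f t| + |f (b n) - f t| := by
    intro n
    obtain ⟨hθ0, hθ1⟩ := hθ n
    rw [Real.norm_eq_abs, dyadicInterp_eq_of_mem_cell f n (h1 n) (h2 n)]
    set θ := t * 2 ^ n - j n
    calc |f (a n) + θ * (f (b n) - f (a n)) - f t|
        = |(1 - θ) * (f (a n) - f t) + θ * (f (b n) - f t)| := by ring_nf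
      _ ≤ (1 - θ) * |f (a n) - f t| + θ * |f (b n) - f t| := by
          refine (abs_add_le _ _).trans ?_
          rw [abs_mul, abs_mul, abs_of_nonneg hθ0, abs_of_nonneg (by linarith)]
      _ ≤ _ := by nlinarith [abs_nonneg (f (a n) - f t), abs_nonneg (f (b n) - f t)]
  have hfa := ((hf t ht).tendsto.comp ha).sub_const (f t)
  have hfb := ((hf t ht).tendsto.comp hb).sub_const (f t)
  rw [tendsto_iff_norm_sub_tendsto_zero]
  refine squeeze_zero (fun n => norm_nonneg _) hbound ?_
  simpa using hfa.abs.add hfb.abs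

lemma abs_sub_le_of_abs_dyadicIncrement_sub_le (hf : ContinuousOn f (Icc 0 1)) {s t : ℝ}
    (hs : s ∈ Icc (0 : ℝ) 1) (ht : t ∈ Icc (0 : ℝ) 1) (N : ℕ) {c : ℕ → ℝ} (hc : Summable c)
    (hinc : ∀ i, |dyadicIncrement f (N + i) t - dyadicIncrement f (N + i) s| ≤ c i) :
    |f t - f s| ≤ |dyadicInterp N f t - dyadicInterp N f s| + ∑' i, c i := by
  set G : ℕ → ℝ := fun m => dyadicInterp (N + m) f t - dyadicInterp (N + m) f s
  have hG : ∀ m, |G m| ≤ |G 0| + ∑' i, c i := fun m => by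
    have htel := dist_le_range_sum_dist G m
    have hsum : ∑ i ∈ range m, dist (G i) (G (i + 1)) ≤ ∑' i, c i := by
      refine (sum_le_sum fun i _ => ?_).trans
        (hc.sum_le_tsum _ fun i _ => (abs_nonneg _).trans (hinc i))
      rw [Real.dist_eq, abs_sub_comm]
      refine le_of_eq_of_le ?_ (hinc i)
      simp only [G, dyadicIncrement, ← add_assoc]
      ring_nf
    rw [Real.dist_eq] at htel
    linarith [abs_sub_abs_le_abs_sub (G m) (G 0), abs_sub_comm (G 0) (G m)]
  have hlim : Tendsto (fun m => |G m|) atTop (𝓝 |f t - f s|) := by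
    have := (((tendsto_dyadicInterp f hf ht).sub (tendsto_dyadicInterp f hf hs)).comp
      (tendsto_add_atTop_nat N)).abs
    simpa [G, Function.comp_def, add_comm] using this
  simpa [G] using le_of_tendsto' hlim hG

end DyadicInterpolation

lemma holderNorm01_le_add {a C : ℝ} {u v : ℝ → ℝ} (ha : a ≤ 1) (hC : 0 ≤ C)
    (hv : ∃ L, ∀ s t : ℝ, 0 ≤ s → s ≤ t → t ≤ 1 → |v t - v s| ≤ L * (t - s))
    (huv : ∀ s t : ℝ, 0 ≤ s → s < t → t ≤ 1 → |u t - u s| ≤ |v t - v s| + C * (t - s) ^ a) :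
    holderNorm01 a u ≤ holderNorm01 a v + C := by
  obtain ⟨L, hL⟩ := hv
  have hbdd : BddAbove
      {c : ℝ | ∃ s t : ℝ, 0 ≤ s ∧ s < t ∧ t ≤ 1 ∧ c = |v t - v s| / (t - s) ^ a} := by
    refine ⟨max L 0, ?_⟩
    rintro _ ⟨s, t, hs, hst, ht, rfl⟩
    rw [div_le_iff₀ (Real.rpow_pos_of_pos (sub_pos.2 hst) a)]
    calc |v t - v s| ≤ L * (t - s) := hL s t hs hst.le ht
      _ ≤ max L 0 * (t - s) := mul_le_mul_of_nonneg_right (le_max_left L 0) (by linarith)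
      _ ≤ max L 0 * (t - s) ^ a := by
        gcongr
        exact Real.self_le_rpow_of_le_one (by linarith) (by linarith) ha
  have hv0 : 0 ≤ holderNorm01 a v := by
    refine Real.sSup_nonneg ?_
    rintro _ ⟨s, t, hs, hst, ht, rfl⟩
    have := Real.rpow_pos_of_pos (sub_pos.2 hst) a
    positivity
  refine Real.sSup_le ?_ (by positivity)
  rintro _ ⟨s, t, hs, hst, ht, rfl⟩
  have hpos := Real.rpow_pos_of_pos (sub_pos.2 hst) a
  calc |u t - u s| / (t - s) ^ a ≤ |v t - v s| / (t - s) ^ a + C := by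
        rw [div_add' _ _ _ hpos.ne', div_le_div_iff_of_pos_right hpos]
        exact huv s t hs hst ht
    _ ≤ holderNorm01 a v + C := by
        gcongr
        exact le_csSup hbdd ⟨s, t, hs, hst, ht, rfl⟩

lemma two_rpow_mul_two_pow_rpow (b a : ℝ) (k : ℕ) :
    (2 : ℝ) ^ (-b * (k : ℝ)) * ((2 : ℝ) ^ k) ^ a = ((2 : ℝ) ^ (-(b - a))) ^ k := by
  rw [← Real.rpow_natCast, ← Real.rpow_mul zero_le_two, ← Real.rpow_add two_pos,
    ← Real.rpow_mul_natCast zero_le_two]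
  ring_nf

lemma abs_dyadicIncrement_sub_le_of_mdGap_le {H α δ ρ : ℝ} (hα0 : 0 ≤ α) (hα1 : α ≤ 1)
    {f : ℝ → ℝ} {n : ℕ} (hgap : mdGap f (n + 1) ≤ ρ * (2 : ℝ) ^ (-(H - δ) * ((n + 1 : ℕ) : ℝ)))
    {s t : ℝ} (hs : 0 ≤ s) (hst : s ≤ t) (ht : t ≤ 1) :
    |dyadicIncrement f n t - dyadicIncrement f n s| ≤
      2 * ρ * ((2 : ℝ) ^ (-(H - α - δ))) ^ (n + 1) * (t - s) ^ α := by
  have hcomb : (2 : ℝ) ^ (-(H - δ) * ((n + 1 : ℕ) : ℝ)) * ((2 : ℝ) ^ (n + 1)) ^ α =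
      ((2 : ℝ) ^ (-(H - α - δ))) ^ (n + 1) := by
    rw [two_rpow_mul_two_pow_rpow, show -(H - δ - α) = -(H - α - δ) by ring]
  refine (abs_dyadicIncrement_sub_le_rpow f n hα0 hα1 hs hst ht).trans ?_
  rw [Real.mul_rpow (by positivity) (sub_nonneg.2 hst)]
  calc _ ≤ 2 * (ρ * (2 : ℝ) ^ (-(H - δ) * ((n + 1 : ℕ) : ℝ))) *
        (((2 : ℝ) ^ (n + 1)) ^ α * (t - s) ^ α) := by gcongr
    _ = _ := by rw [← hcomb]; ring

theorem holderNorm01_le_of_mdGap_le {H α δ ρ : ℝ} (hα0 : 0 ≤ α) (hα1 : α ≤ 1)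
    (hαδ : α + δ < H) {f : ℝ → ℝ} (hf : ContinuousOn f (Icc 0 1)) (N : ℕ)
    (hgap : ∀ n, N ≤ n → mdGap f (n + 1) ≤ ρ * (2 : ℝ) ^ (-(H - δ) * ((n + 1 : ℕ) : ℝ))) :
    holderNorm01 α f ≤ holderNorm01 α (dyadicInterp N f) +
      ρ * (2 : ℝ) ^ (2 - α) * (2 : ℝ) ^ (-(H - α - δ) * ((N : ℝ) + 1)) /
        (1 - (2 : ℝ) ^ (-(H - α - δ))) := by
  set r : ℝ := (2 : ℝ) ^ (-(H - α - δ))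
  have hr0 : 0 < r := Real.rpow_pos_of_pos two_pos _
  have hr1 : r < 1 := Real.rpow_lt_one_of_one_lt_of_neg one_lt_two (by linarith)
  have hρ : 0 ≤ ρ := by
    have h := (mdGap_succ_nonneg f N).trans (hgap N le_rfl)
    exact nonneg_of_mul_nonneg_left h (Real.rpow_pos_of_pos two_pos _)
  have hrN : (2 : ℝ) ^ (-(H - α - δ) * ((N : ℝ) + 1)) = r ^ (N + 1) := by
    rw [← Real.rpow_mul_natCast zero_le_two]; push_cast; rfl
  have htwo : (2 : ℝ) ≤ 2 ^ (2 - α) := by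
    simpa using Real.rpow_le_rpow_of_exponent_le one_le_two (by linarith : (1 : ℝ) ≤ 2 - α)
  refine holderNorm01_le_add hα1 (by positivity) (exists_lipschitz_dyadicInterp f N)
    fun s t hs hst ht => ?_
  set K := 2 * ρ * r ^ (N + 1) * (t - s) ^ α
  have hsum := abs_sub_le_of_abs_dyadicIncrement_sub_le f hf ⟨hs, hst.le.trans ht⟩
    ⟨hs.trans hst.le, ht⟩ N ((summable_geometric_of_lt_one hr0.le hr1).mul_left K)
    fun i => (abs_dyadicIncrement_sub_le_of_mdGap_le hα0 hα1 (hgap (N + i) (by omega)) hs hst.le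
      ht).trans_eq (by rw [pow_add, pow_succ]; ring)
  rw [tsum_mul_left, tsum_geometric_of_lt_one hr0.le hr1] at hsum
  refine hsum.trans (add_le_add le_rfl ?_)
  have : 0 < 1 - r := by linarith
  calc K * (1 - r)⁻¹ = 2 * (ρ * r ^ (N + 1) / (1 - r)) * (t - s) ^ α := by
        simp only [K]; field_simp
    _ ≤ 2 ^ (2 - α) * (ρ * r ^ (N + 1) / (1 - r)) * (t - s) ^ α := by gcongr
    _ = _ := by rw [hrN]; ring

/-- `lastRB H δ ρ f = sSup {k | IsRecordBreaker H δ ρ f k}` definitionally. -/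
def IsRecordBreaker (H δ ρ : ℝ) (f : ℝ → ℝ) (k : ℕ) : Prop :=
  1 ≤ k ∧ ρ * (2 : ℝ) ^ (-(H - δ) * (k : ℝ)) ≤ mdGap f k

lemma mdGap_le_of_lastRB_le {H δ ρ : ℝ} {f : ℝ → ℝ}
    (hev : ∀ᶠ k in atTop, ¬ IsRecordBreaker H δ ρ f k) {n : ℕ} (hn : lastRB H δ ρ f ≤ n) :
    mdGap f (n + 1) ≤ ρ * (2 : ℝ) ^ (-(H - δ) * ((n + 1 : ℕ) : ℝ)) := by
  obtain ⟨K, hK⟩ := eventually_atTop.1 hev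
  have hbdd : BddAbove {k | IsRecordBreaker H δ ρ f k} :=
    ⟨K, fun k hk => not_lt.1 fun hlt => hK k hlt.le hk⟩
  by_contra hgt
  have hrec : IsRecordBreaker H δ ρ f (n + 1) := ⟨Nat.le_add_left 1 n, (not_le.1 hgt).le⟩
  exact absurd (hn.trans_lt (Nat.lt_succ_self n)) (not_lt.2 (le_csSup hbdd hrec))

lemma hasSubgaussianMGF_id_gaussianReal {v w : ℝ≥0} (hvw : v ≤ w) :
    HasSubgaussianMGF id w (gaussianReal 0 v) where
  integrable_exp_mul t := integrable_exp_mul_gaussianReal t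
  mgf_le t := by
    simp only [mgf_id_gaussianReal, zero_mul, zero_add]
    gcongr

lemma gaussianReal_setOf_le_abs_le {v w : ℝ≥0} (hvw : v ≤ w) {x : ℝ} (hx : 0 ≤ x) :
    gaussianReal 0 v {y | x ≤ |y|} ≤ ENNReal.ofReal (2 * Real.exp (-x ^ 2 / (2 * w))) := by
  have h := hasSubgaussianMGF_id_gaussianReal hvw
  have hsplit : {y : ℝ | x ≤ |y|} = {y | x ≤ id y} ∪ {y | x ≤ (-id) y} := by
    ext; simp [le_abs]
  rw [hsplit, two_mul, ENNReal.ofReal_add (by positivity) (by positivity)]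
  refine (measure_union_le _ _).trans (add_le_add ?_ ?_) <;>
    rw [← ofReal_measureReal (measure_ne_top _ _)] <;>
    apply ENNReal.ofReal_le_ofReal
  · exact h.measure_ge_le hx
  · exact h.neg.measure_ge_le hx

lemma sum_fbmCov_midpoint_defect {H m u v h : ℝ} (hH : H ≠ 0) (hh : 0 ≤ h) (hmu : m - u = h)
    (hvm : v - m = h) :
    ∑ i, ∑ i', ![1, -1 / 2, -1 / 2] i * ![1, -1 / 2, -1 / 2] i' *
        fbmCov H (![m, u, v] i) (![m, u, v] i') = h ^ (2 * H) - (2 * h) ^ (2 * H) / 4 := by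
  have hzero : ∀ x : ℝ, |x - x| ^ (2 * H) = 0 := fun x => by
    rw [sub_self, abs_zero, Real.zero_rpow (mul_ne_zero two_ne_zero hH)]
  have humh : |u - m| = h := by rw [abs_sub_comm, hmu, abs_of_nonneg hh]
  have hmvh : |m - v| = h := by rw [abs_sub_comm, hvm, abs_of_nonneg hh]
  have hvu : v - u = 2 * h := by linarith
  have huv : |u - v| = 2 * h := by rw [abs_sub_comm, hvu, abs_of_nonneg (by linarith)]
  simp only [Fin.sum_univ_three, Matrix.cons_val_zero, Matrix.cons_val_one, Matrix.cons_val_two,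
    Matrix.head_cons, Matrix.tail_cons, fbmCov, hzero, humh, hmvh, huv, hmu, hvm, hvu,
    abs_of_nonneg hh, abs_of_nonneg (by linarith : (0 : ℝ) ≤ 2 * h)]
  ring

lemma summable_two_pow_mul_exp_neg_mul_pow {c q : ℝ} (hc : 0 < c) (hq : 1 < q) :
    Summable fun k : ℕ => (2 : ℝ) ^ k * Real.exp (-(c * q ^ k)) := by
  refine summable_of_ratio_test_tendsto_lt_one zero_lt_one
    (Eventually.of_forall fun k => by positivity) ?_
  have hratio : ∀ k : ℕ, ‖(2 : ℝ) ^ (k + 1) * Real.exp (-(c * q ^ (k + 1)))‖ /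
      ‖(2 : ℝ) ^ k * Real.exp (-(c * q ^ k))‖ = 2 * Real.exp (-(c * (q - 1) * q ^ k)) := by
    intro k
    rw [Real.norm_of_nonneg (by positivity), Real.norm_of_nonneg (by positivity),
      div_eq_iff (by positivity)]
    have : -(c * q ^ (k + 1)) = -(c * (q - 1) * q ^ k) + -(c * q ^ k) := by ring
    rw [this, Real.exp_add]
    ring
  simp_rw [hratio]
  have hgrow : Tendsto (fun k : ℕ => c * (q - 1) * q ^ k) atTop atTop :=
    (tendsto_pow_atTop_atTop_of_one_lt hq).const_mul_atTop (by nlinarith)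
  simpa using (Real.tendsto_exp_neg_atTop_nhds_zero.comp hgrow).const_mul 2

section FBM

variable {Ω : Type*} [MeasurableSpace Ω] {P : Measure Ω} {H : ℝ} {B : Ω → ℝ → ℝ}

lemma IsFBM.map_dyadicDefect (hH : H ≠ 0) (hB : IsFBM P H B) {n j : ℕ} (hj : j < 2 ^ n) :
    P.map (fun ω => dyadicDefect (B ω) n j) =
      gaussianReal 0
        ((1 / 2 ^ (n + 1) : ℝ) ^ (2 * H) - (2 * (1 / 2 ^ (n + 1))) ^ (2 * H) / 4).toNNReal := by
  set m : ℝ := (2 * (j : ℝ) + 1) / 2 ^ (n + 1)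
  set u : ℝ := (j : ℝ) / 2 ^ n
  set v : ℝ := ((j : ℝ) + 1) / 2 ^ n
  have hpos : (0 : ℝ) < 2 ^ n := by positivity
  have hsucc : (2 : ℝ) ^ (n + 1) = 2 * 2 ^ n := pow_succ' 2 n
  have hmu : m - u = 1 / 2 ^ (n + 1) := by simp only [m, u]; rw [hsucc]; field_simp; ring
  have hvm : v - m = 1 / 2 ^ (n + 1) := by simp only [m, v]; rw [hsucc]; field_simp; ring
  have hj' : (j : ℝ) + 1 ≤ 2 ^ n := by exact_mod_cast hj
  have hm : m ∈ Icc (0 : ℝ) 1 :=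
    ⟨by positivity, by rw [div_le_one (by positivity), hsucc]; linarith⟩
  have hu : u ∈ Icc (0 : ℝ) 1 := ⟨by positivity, by rw [div_le_one hpos]; linarith⟩
  have hv : v ∈ Icc (0 : ℝ) 1 := ⟨by positivity, by rw [div_le_one hpos]; linarith⟩
  have hmem : ∀ i, ![m, u, v] i ∈ Icc (0 : ℝ) 1 := by
    intro i; fin_cases i; exacts [hm, hu, hv]
  have hfun : (fun ω => ∑ i, ![1, -1 / 2, -1 / 2] i * B ω (![m, u, v] i)) =
      fun ω => dyadicDefect (B ω) n j := by
    funext ω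
    simp only [Fin.sum_univ_three, Matrix.cons_val_zero, Matrix.cons_val_one, Matrix.cons_val_two,
      Matrix.head_cons, Matrix.tail_cons, dyadicDefect, m, u, v]
    ring
  rw [← hfun, hB.gaussian 3 ![m, u, v] hmem ![1, -1 / 2, -1 / 2],
    sum_fbmCov_midpoint_defect hH (by positivity) hmu hvm]

lemma measure_le_abs_dyadicDefect_le (hH : 0 < H) (hB : IsFBM P H B) {n j : ℕ}
    (hj : j < 2 ^ n) {x : ℝ} (hx : 0 ≤ x) :
    P {ω | x ≤ |dyadicDefect (B ω) n j|} ≤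
      ENNReal.ofReal
        (2 * Real.exp (-x ^ 2 / (2 * (2 : ℝ) ^ (-(2 * H) * ((n + 1 : ℕ) : ℝ))))) := by
  set h : ℝ := 1 / 2 ^ (n + 1) with hh
  have hmeas : Measurable fun ω => dyadicDefect (B ω) n j :=
    (hB.measurable _).sub (((hB.measurable _).add (hB.measurable _)).div_const 2)
  have hvar : h ^ (2 * H) = (2 : ℝ) ^ (-(2 * H) * ((n + 1 : ℕ) : ℝ)) := by
    rw [hh, one_div, Real.inv_rpow (by positivity), ← Real.rpow_natCast,
      ← Real.rpow_mul zero_le_two, ← Real.rpow_neg zero_le_two]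
    ring_nf
  have hw : (h ^ (2 * H) - (2 * h) ^ (2 * H) / 4).toNNReal ≤ (h ^ (2 * H)).toNNReal :=
    Real.toNNReal_le_toNNReal <| sub_le_self _ <| div_nonneg (by positivity) zero_le_four
  calc P {ω | x ≤ |dyadicDefect (B ω) n j|}
      = P.map (fun ω => dyadicDefect (B ω) n j) {y | x ≤ |y|} :=
        (Measure.map_apply hmeas (measurableSet_le measurable_const measurable_abs)).symm
    _ ≤ _ := by
        rw [hB.map_dyadicDefect hH.ne' hj]
        refine (gaussianReal_setOf_le_abs_le hw hx).trans_eq ?_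
        rw [Real.coe_toNNReal _ (by positivity), hvar]

lemma measure_isRecordBreaker_le (hH : 0 < H) (hB : IsFBM P H B) {δ ρ : ℝ} (hρ : 0 ≤ ρ)
    (k : ℕ) :
    P {ω | IsRecordBreaker H δ ρ (B ω) k} ≤
      ENNReal.ofReal (2 ^ k * Real.exp (-(ρ ^ 2 / 2 * ((2 : ℝ) ^ (2 * δ)) ^ k))) := by
  rcases k with _ | n
  · simp [IsRecordBreaker]
  set x := ρ * (2 : ℝ) ^ (-(H - δ) * ((n + 1 : ℕ) : ℝ))
  have hx : 0 ≤ x := by positivity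
  have hexp : -x ^ 2 / (2 * (2 : ℝ) ^ (-(2 * H) * ((n + 1 : ℕ) : ℝ))) =
      -(ρ ^ 2 / 2 * ((2 : ℝ) ^ (2 * δ)) ^ (n + 1)) := by
    have hsq : ((2 : ℝ) ^ (-(H - δ) * ((n + 1 : ℕ) : ℝ))) ^ 2 =
        ((2 : ℝ) ^ (2 * δ)) ^ (n + 1) * (2 : ℝ) ^ (-(2 * H) * ((n + 1 : ℕ) : ℝ)) := by
      rw [← Real.rpow_natCast _ 2, ← Real.rpow_mul zero_le_two,
        ← Real.rpow_mul_natCast zero_le_two, ← Real.rpow_add two_pos]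
      ring_nf
    have hpos : (0 : ℝ) < (2 : ℝ) ^ (-(2 * H) * ((n + 1 : ℕ) : ℝ)) := by positivity
    simp only [x]
    rw [mul_pow, hsq]
    field_simp
  have hsub : {ω | IsRecordBreaker H δ ρ (B ω) (n + 1)} ⊆
      ⋃ j ∈ range (2 ^ n), {ω | x ≤ |dyadicDefect (B ω) n j|} := by
    intro ω hω
    obtain ⟨j, hj, hle⟩ := (le_mdGap_succ_iff (B ω) n).1 hω.2
    exact mem_biUnion (mem_range.2 hj) hle
  calc _ ≤ ∑ j ∈ range (2 ^ n), P {ω | x ≤ |dyadicDefect (B ω) n j|} :=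
        (measure_mono hsub).trans (measure_biUnion_finset_le _ _)
    _ ≤ ∑ _j ∈ range (2 ^ n),
          ENNReal.ofReal (2 * Real.exp (-(ρ ^ 2 / 2 * ((2 : ℝ) ^ (2 * δ)) ^ (n + 1)))) :=
        sum_le_sum fun j hj =>
          (measure_le_abs_dyadicDefect_le hH hB (mem_range.1 hj) hx).trans_eq (by rw [hexp])
    _ = _ := by
        rw [sum_const, card_range, nsmul_eq_mul, ← ENNReal.ofReal_natCast, ← ENNReal.ofReal_mul
          (by positivity)]
        push_cast
        ring_nf

lemma ae_eventually_not_isRecordBreaker (hH : 0 < H) (hB : IsFBM P H B) {δ ρ : ℝ} (hδ : 0 < δ)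
    (hρ : 0 < ρ) : ∀ᵐ ω ∂P, ∀ᶠ k in atTop, ¬ IsRecordBreaker H δ ρ (B ω) k := by
  have hsum := summable_two_pow_mul_exp_neg_mul_pow (c := ρ ^ 2 / 2) (by positivity)
    (Real.one_lt_rpow one_lt_two (by positivity : 0 < 2 * δ))
  refine ae_eventually_notMem (s := fun k => {ω | IsRecordBreaker H δ ρ (B ω) k}) ?_
  refine ne_top_of_le_ne_top ?_
    (ENNReal.tsum_le_tsum fun k => measure_isRecordBreaker_le hH hB hρ.le k)
  rw [← ENNReal.ofReal_tsum_of_nonneg (fun k => by positivity) hsum]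
  exact ENNReal.ofReal_ne_top

end FBM

theorem stmt17_general {Ω : Type*} [MeasurableSpace Ω] (P : Measure Ω)
    (H α δ ν ν' ρ : ℝ) (hH : H ∈ Set.Ioo (1/2 : ℝ) 1) (hα : α ∈ Set.Ioo (1/2 : ℝ) H)
    (hδ : δ ∈ Set.Ioo (0:ℝ) (H - α))
    (hν : 0 < ν) (hν' : 0 < ν') (hρ : ρ = 2 * (ν + ν'))
    (B : Ω → ℝ → ℝ) (hB : IsFBM P H B) :
    ∀ᵐ ω ∂P,
      holderNorm01 α (B ω) ≤
        holderNorm01 α (dyadicInterp (lastRB H δ ρ (B ω)) (B ω)) +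
          ρ * (2:ℝ) ^ (2 - α) *
            (2:ℝ) ^ (-(H - α - δ) * ((lastRB H δ ρ (B ω) : ℝ) + 1)) /
              (1 - (2:ℝ) ^ (-(H - α - δ))) := by
  obtain ⟨hα0, hαH⟩ := hα
  obtain ⟨hδ0, hδH⟩ := hδ
  have hH0 : 0 < H := by linarith
  have hρ0 : 0 < ρ := by rw [hρ]; positivity
  filter_upwards [ae_eventually_not_isRecordBreaker hH0 hB hδ0 hρ0] with ω hω
  exact holderNorm01_le_of_mdGap_le (by linarith) (by linarith [hH.2]) (by linarith)
    (hB.continuousOn ω) _ fun n hn => mdGap_le_of_lastRB_le hω hn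

/-- Corollary (computable bound on the Hölder norm of fBM): almost surely
`‖B‖_α ≤ ‖B_N‖_α + ρ·2^{2−α}·2^{−(H−α−δ)(N+1)}/(1 − 2^{−(H−α−δ)})` where `N` is the
level of the last record-breaker. -/
theorem stmt17 {Ω : Type*} [MeasurableSpace Ω] (P : Measure Ω) [IsProbabilityMeasure P]
    (H α δ ν ν' ρ : ℝ) (hH : H ∈ Set.Ioo (1/2 : ℝ) 1) (hα : α ∈ Set.Ioo (1/2 : ℝ) H)
    (hδ : δ ∈ Set.Ioo (0:ℝ) (H - α))
    (hν : 0 < ν) (hν' : 0 < ν') (hρ : ρ = 2 * (ν + ν'))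
    (B : Ω → ℝ → ℝ) (hB : IsFBM P H B) :
    ∀ᵐ ω ∂P,
      holderNorm01 α (B ω) ≤
        holderNorm01 α (dyadicInterp (lastRB H δ ρ (B ω)) (B ω)) +
          ρ * (2:ℝ) ^ (2 - α) *
            (2:ℝ) ^ (-(H - α - δ) * ((lastRB H δ ρ (B ω) : ℝ) + 1)) /
              (1 - (2:ℝ) ^ (-(H - α - δ))) :=
  stmt17_general P H α δ ν ν' ρ hH hα hδ hν hν' hρ B hB
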